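/- arXiv:2508.18747 — 4 statements merged into one kernel-verified Lean document; each statement's English description precedes it below -/
import Mathlib

section
/- In a semilinear space X, if x is convex (i.e., (α+β)x = αx + βx for all α,β ≥ 0) and invertible with inverse x', then x' is also convex and invertible. -/
structure SemilinearSpace (X : Type*) where
  add : X → X → X
  smul : ℝ → X → X
  theta : X
  add_comm : ∀ x y, add x y = add y x
  add_assoc : ∀ x y z, add x (add y z) = add (add x y) z
  add_theta : ∀ x, add x theta = x
  smul_add : ∀ (a : ℝ) x y, smul a (add x y) = add (smul a x) (smul a y)
  smul_smul : ∀ (a b : ℝ) x, smul a (smul b x) = smul (a * b) x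
  one_smul : ∀ x, smul 1 x = x
  zero_smul : ∀ x, smul 0 x = theta

/-- `x` is a convex element: `(α+β)x = αx + βx` for all `α, β ≥ 0`. -/
def SemilinearSpace.IsConvexElem {X : Type*} (S : SemilinearSpace X) (x : X) : Prop :=
  ∀ a b : ℝ, 0 ≤ a → 0 ≤ b → S.smul (a + b) x = S.add (S.smul a x) (S.smul b x)

/-! Inverses in the commutative monoid `(X, +, θ)` are unique. Both `(α+β)x'` and `αx' + βx'`
are inverses of `(α+β)x = αx + βx`, so they coincide. -/

namespace SemilinearSpace

variable {X : Type*} (S : SemilinearSpace X)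

theorem theta_add (x : X) : S.add S.theta x = x := by
  rw [S.add_comm, S.add_theta]

theorem smul_theta (c : ℝ) : S.smul c S.theta = S.theta := by
  rw [← S.zero_smul S.theta, S.smul_smul, mul_zero]

theorem add_add_add_comm (a b c d : X) :
    S.add (S.add a b) (S.add c d) = S.add (S.add a c) (S.add b d) := by
  rw [← S.add_assoc, S.add_assoc b, S.add_comm b c, ← S.add_assoc c, S.add_assoc]

theorem left_inv_eq_right_inv {u z v : X} (hu : S.add u z = S.theta)
    (hv : S.add z v = S.theta) : u = v :=
  calc u = S.add u (S.add z v) := by rw [hv, S.add_theta]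
    _ = S.add (S.add u z) v := S.add_assoc u z v
    _ = v := by rw [hu, S.theta_add]

theorem smul_add_smul_eq_theta {x x' : X} (hinv : S.add x x' = S.theta) (c : ℝ) :
    S.add (S.smul c x) (S.smul c x') = S.theta := by
  rw [← S.smul_add, hinv, S.smul_theta]

theorem IsConvexElem.of_add_eq_theta {S : SemilinearSpace X} {x x' : X}
    (hconv : S.IsConvexElem x) (hinv : S.add x x' = S.theta) : S.IsConvexElem x' := by
  intro a b ha hb
  have hsum : S.add (S.smul (a + b) x) (S.add (S.smul a x') (S.smul b x')) = S.theta := by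
    rw [hconv a b ha hb, S.add_add_add_comm, S.smul_add_smul_eq_theta hinv,
      S.smul_add_smul_eq_theta hinv, S.add_theta]
  have hinv' : S.add (S.smul (a + b) x') (S.smul (a + b) x) = S.theta := by
    rw [S.add_comm, S.smul_add_smul_eq_theta hinv]
  exact S.left_inv_eq_right_inv hinv' hsum

end SemilinearSpace

/-- If `x` is convex and invertible with inverse `x'`, then `x'` is also convex
and invertible. -/
theorem inverse_of_convex_invertible_is_convex_invertible {X : Type*}
    (S : SemilinearSpace X) (x x' : X)
    (hconv : S.IsConvexElem x) (hinv : S.add x x' = S.theta) :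
    S.IsConvexElem x' ∧ ∃ y : X, S.add x' y = S.theta :=
  ⟨hconv.of_add_eq_theta hinv, x, by rw [S.add_comm, hinv]⟩
end

section
/- Let X be an isotropic L-space, (T,r) a metric space, ω a modulus of continuity, f ∈ H^ω(T,ℝ), and x ∈ X a convex invertible element with h_X(x,θ) ≤ 1 and inverse x'. Then the function f_x(t) := f_+(t)·x + f_−(t)·x' belongs to H^ω(T,X), i.e., h_X(f_x(t), f_x(s)) ≤ ω(r(t,s)) for all t,s ∈ T. -/
structure LSpace (X : Type*) where
  add : X → X → X
  smul : ℝ → X → X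
  theta : X
  h : X → X → ℝ
  add_comm : ∀ x y, add x y = add y x
  add_assoc : ∀ x y z, add x (add y z) = add (add x y) z
  add_theta : ∀ x, add x theta = x
  smul_add : ∀ (a : ℝ) x y, smul a (add x y) = add (smul a x) (smul a y)
  smul_smul : ∀ (a b : ℝ) x, smul a (smul b x) = smul (a * b) x
  one_smul : ∀ x, smul 1 x = x
  zero_smul : ∀ x, smul 0 x = theta
  h_self : ∀ x, h x x = 0
  h_comm : ∀ x y, h x y = h y x
  h_triangle : ∀ x y z, h x z ≤ h x y + h y z
  h_eq_zero : ∀ x y, h x y = 0 → x = y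
  h_smul : ∀ (a : ℝ) x y, h (smul a x) (smul a y) = |a| * h x y
  h_add_le : ∀ x y z, h (add x z) (add y z) ≤ h x y


/-- `ω` is a modulus of continuity: non-decreasing, continuous, subadditive,
and vanishing at `0`. -/
def IsModulus (ω : ℝ → ℝ) : Prop :=
  ω 0 = 0 ∧ (∀ a b : ℝ, 0 ≤ a → a ≤ b → ω a ≤ ω b) ∧
    ContinuousOn ω (Set.Ici 0) ∧
    ∀ a b : ℝ, 0 ≤ a → 0 ≤ b → ω (a + b) ≤ ω a + ω b


/-!
Write `F a = a₊ x + a₋ x'`. Since `x + x' = θ`, adding `c x` with `c ≥ a₋` cancels the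
`x'`-part, and convexity of `x` gives `F a + c x = (a + c) x`. Isotropy lets us add the same
element to both arguments of `h`, so with `c = b₋` for `b ≤ a` we get
`h(F a, F b) = h((a + c) x, (b + c) x) = h((a - b) x, θ) = (a - b) h(x, θ)`.
Hence `h(f_x(t), f_x(s)) = |f(t) - f(s)| h(x, θ) ≤ |f(t) - f(s)| ≤ ω(r(t, s))`.
-/

namespace LSpace

variable {X : Type*} (L : LSpace X)

def IsIsotropic : Prop :=
  ∀ x y z : X, L.h (L.add x z) (L.add y z) = L.h x y

def IsConvex (x : X) : Prop :=
  ∀ a b : ℝ, 0 ≤ a → 0 ≤ b → L.smul (a + b) x = L.add (L.smul a x) (L.smul b x)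

def posNegSMul (x x' : X) (a : ℝ) : X :=
  L.add (L.smul (max a 0) x) (L.smul (max (-a) 0) x')

theorem smul_theta (c : ℝ) : L.smul c L.theta = L.theta := by
  rw [← L.zero_smul L.theta, L.smul_smul, mul_zero]

theorem h_smul_theta (c : ℝ) (x : X) : L.h (L.smul c x) L.theta = |c| * L.h x L.theta := by
  conv_lhs => rw [← L.smul_theta c]
  exact L.h_smul c x L.theta

theorem theta_add (x : X) : L.add L.theta x = x := by
  rw [L.add_comm, L.add_theta]

theorem smul_add_smul_eq_theta {x x' : X} (hinv : L.add x x' = L.theta) (c : ℝ) :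
    L.add (L.smul c x) (L.smul c x') = L.theta := by
  rw [← L.smul_add, hinv, L.smul_theta]

variable {L}

theorem h_smul_smul_of_le (hiso : L.IsIsotropic) {x : X} (hconv : L.IsConvex x)
    {a b : ℝ} (hb : 0 ≤ b) (hba : b ≤ a) :
    L.h (L.smul a x) (L.smul b x) = (a - b) * L.h x L.theta := by
  have hsplit : L.smul a x = L.add (L.smul (a - b) x) (L.smul b x) := by
    rw [← hconv (a - b) b (sub_nonneg.2 hba) hb, sub_add_cancel]
  have hshift := hiso (L.smul (a - b) x) L.theta (L.smul b x)
  rw [L.theta_add, ← hsplit] at hshift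
  rw [hshift, L.h_smul_theta, abs_of_nonneg (sub_nonneg.2 hba)]

theorem posNegSMul_add_smul {x x' : X} (hconv : L.IsConvex x) (hinv : L.add x x' = L.theta)
    {a c : ℝ} (hc : 0 ≤ c) (hac : 0 ≤ a + c) :
    L.add (L.posNegSMul x x' a) (L.smul c x) = L.smul (a + c) x := by
  set p := max a 0
  set n := max (-a) 0
  have hn : 0 ≤ n := le_max_right _ _
  have hcn : 0 ≤ c - n := sub_nonneg.2 (max_le (by linarith) hc)
  have hc_split : L.smul c x = L.add (L.smul n x) (L.smul (c - n) x) := by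
    rw [← hconv n (c - n) hn hcn, add_sub_cancel]
  have hpa : p + (c - n) = a + c := by
    rw [← max_zero_sub_max_neg_zero_eq_self a]; ring
  calc L.add (L.posNegSMul x x' a) (L.smul c x)
      = L.add (L.add (L.smul p x) (L.add (L.smul n x) (L.smul n x'))) (L.smul (c - n) x) := by
        rw [posNegSMul, hc_split, L.add_assoc, L.add_comm (L.smul n x) (L.smul n x'),
          ← L.add_assoc (L.smul p x)]
    _ = L.smul (a + c) x := by
        rw [L.smul_add_smul_eq_theta hinv, L.add_theta, ← hconv p (c - n) (le_max_right _ _) hcn,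
          hpa]

theorem h_posNegSMul (hiso : L.IsIsotropic) {x x' : X} (hconv : L.IsConvex x)
    (hinv : L.add x x' = L.theta) (a b : ℝ) :
    L.h (L.posNegSMul x x' a) (L.posNegSMul x x' b) = |a - b| * L.h x L.theta := by
  wlog hba : b ≤ a generalizing a b
  · rw [L.h_comm, abs_sub_comm]
    exact this b a (le_of_not_ge hba)
  set c := max (-b) 0
  have hc : 0 ≤ c := le_max_right _ _
  have hbc : 0 ≤ b + c := by
    rw [← max_zero_sub_max_neg_zero_eq_self b]; simp only [c, sub_add_cancel, le_max_right]
  rw [← hiso _ _ (L.smul c x), posNegSMul_add_smul hconv hinv hc (by linarith),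
    posNegSMul_add_smul hconv hinv hc hbc, h_smul_smul_of_le hiso hconv hbc (by linarith),
    abs_of_nonneg (sub_nonneg.2 hba)]
  ring

end LSpace

theorem fx_mem_Homega_general {X T : Type*} [MetricSpace T] (L : LSpace X)
    (hiso : ∀ x y z : X, L.h (L.add x z) (L.add y z) = L.h x y)
    (ω : ℝ → ℝ)
    (f : T → ℝ) (hf : ∀ t s : T, |f t - f s| ≤ ω (dist t s))
    (x x' : X)
    (hconv : ∀ a b : ℝ, 0 ≤ a → 0 ≤ b → L.smul (a + b) x = L.add (L.smul a x) (L.smul b x))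
    (hinv : L.add x x' = L.theta) (hx1 : L.h x L.theta ≤ 1) :
    ∀ t s : T,
      L.h (L.add (L.smul (max (f t) 0) x) (L.smul (max (-f t) 0) x'))
          (L.add (L.smul (max (f s) 0) x) (L.smul (max (-f s) 0) x'))
        ≤ ω (dist t s) := by
  intro t s
  calc L.h (L.posNegSMul x x' (f t)) (L.posNegSMul x x' (f s))
      = |f t - f s| * L.h x L.theta := LSpace.h_posNegSMul hiso hconv hinv (f t) (f s)
    _ ≤ |f t - f s| := mul_le_of_le_one_right (abs_nonneg _) hx1
    _ ≤ ω (dist t s) := hf t s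

/-- If `X` is an isotropic L-space, `f ∈ H^ω(T,ℝ)`, and `x` is a convex invertible
element with `h(x,θ) ≤ 1` and inverse `x'`, then
`f_x(t) = f₊(t)·x + f₋(t)·x'` belongs to `H^ω(T,X)`. -/
theorem fx_mem_Homega {X T : Type*} [MetricSpace T] (L : LSpace X)
    (hiso : ∀ x y z : X, L.h (L.add x z) (L.add y z) = L.h x y)
    (ω : ℝ → ℝ) (hω : IsModulus ω)
    (f : T → ℝ) (hf : ∀ t s : T, |f t - f s| ≤ ω (dist t s))
    (x x' : X)
    (hconv : ∀ a b : ℝ, 0 ≤ a → 0 ≤ b → L.smul (a + b) x = L.add (L.smul a x) (L.smul b x))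
    (hinv : L.add x x' = L.theta) (hx1 : L.h x L.theta ≤ 1) :
    ∀ t s : T,
      L.h (L.add (L.smul (max (f t) 0) x) (L.smul (max (-f t) 0) x'))
          (L.add (L.smul (max (f s) 0) x) (L.smul (max (-f s) 0) x'))
        ≤ ω (dist t s) :=
  fx_mem_Homega_general L hiso ω f hf x x' hconv hinv hx1
end

section
/- Let (T,r) be a metric compact, μ a Borel measure on T, Q ⊆ T compact, x_1,…,x_n ∈ T, X an L-space with convexifying operator P, and ω a modulus of continuity. For the operator Λf = ∫_Q f dμ on H^ω(T,X) with information I(f) = (P(f(x_1)),…,P(f(x_n))), the method Φ*(I(f)) = Σ_{i=1}^n P(f(x_i))·μ(T_i ∩ Q), where T_1,…,T_n is the Voronoi-type partition of T by nearest point among x_1,…,x_n, satisfies: h_X(∫_Q f dμ, Φ*(I(f))) ≤ ∫_Q min_{1≤i≤n} ω(r(x_i,t)) dμ(t) for all f ∈ H^ω(T,X). -/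
def LSpace.IsConvexElem {X : Type*} (L : LSpace X) (x : X) : Prop :=
  ∀ a b : ℝ, 0 ≤ a → 0 ≤ b → L.smul (a + b) x = L.add (L.smul a x) (L.smul b x)

structure IsConvexifying {X : Type*} (L : LSpace X) (P : X → X) : Prop where
  lipschitz : ∀ x y, L.h (P x) (P y) ≤ L.h x y
  maps_to_convex : ∀ x, L.IsConvexElem (P x)
  surj_on_convex : ∀ y, L.IsConvexElem y → ∃ x, P x = y
  idem : ∀ x, P (P x) = P x
  linear : ∀ (a b : ℝ) (x y : X),
    P (L.add (L.smul a x) (L.smul b y)) = L.add (L.smul a (P x)) (L.smul b (P y))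

open MeasureTheory

/-- Sum of a list of elements of an L-space. -/
def LSpace.lsum {X : Type*} (L : LSpace X) (l : List X) : X :=
  l.foldr L.add L.theta

/-- `T̃_i = {t : r(t,x_i) ≤ r(t,x_j) for all j ≠ i}`. -/
def Ttil {T : Type*} [MetricSpace T] {n : ℕ} (x : Fin n → T) (i : Fin n) : Set T :=
  {t | ∀ j : Fin n, j ≠ i → dist t (x i) ≤ dist t (x j)}

/-- The Voronoi-type partition: `T_1 = T̃_1`, `T_j = T̃_j \ ∪_{i<j} T̃_i`. -/
def Tvor {T : Type*} [MetricSpace T] {n : ℕ} (x : Fin n → T) (i : Fin n) : Set T :=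
  Ttil x i \ ⋃ (j : Fin n) (_ : j < i), Ttil x j

/-! On the cell `T_i ∩ Q` the node `x_i` is a nearest one, so `h(f t, f x_i) ≤ ω(r(x_i,t))`
equals `min_j ω(r(x_j,t))` there. Splitting `∫_Q f` over the cells, comparing each piece with
`∫_{T_i ∩ Q} f(x_i) = P(f(x_i)) μ(T_i ∩ Q)` through `h(∫f, ∫g) ≤ ∫ h(f,g)` and summing with
`h(a + c, b + d) ≤ h(a,b) + h(c,d)` gives the estimate. If `μ Q = ∞`, the conventions
`(⊤ : ℝ≥0∞).toReal = 0` and `∫ = 0` for non-integrable functions force both the integral and the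
method to be `θ`. -/

namespace LSpace

variable {X : Type*} (L : LSpace X)

lemma h_nonneg (x y : X) : 0 ≤ L.h x y := by
  have := L.h_triangle x y x
  rw [L.h_self, L.h_comm y x] at this
  linarith

lemma eq_of_h_nonpos {x y : X} (hxy : L.h x y ≤ 0) : x = y :=
  L.h_eq_zero x y (hxy.antisymm (L.h_nonneg x y))

lemma h_add_add_le (a b c d : X) : L.h (L.add a c) (L.add b d) ≤ L.h a b + L.h c d :=
  calc L.h (L.add a c) (L.add b d)
      ≤ L.h (L.add a c) (L.add b c) + L.h (L.add c b) (L.add d b) := by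
        rw [L.add_comm c b, L.add_comm d b]; exact L.h_triangle _ _ _
    _ ≤ L.h a b + L.h c d := add_le_add (L.h_add_le a b c) (L.h_add_le c d b)

lemma lsum_ofFn_theta (m : ℕ) : L.lsum (List.ofFn fun _ : Fin m => L.theta) = L.theta := by
  induction m with
  | zero => rfl
  | succ m ih =>
    rw [List.ofFn_succ]
    exact (congrArg (L.add L.theta) ih).trans (L.add_theta _)

lemma h_lsum_ofFn_le {m : ℕ} (a b : Fin m → X) :
    L.h (L.lsum (List.ofFn a)) (L.lsum (List.ofFn b)) ≤ ∑ i, L.h (a i) (b i) := by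
  induction m with
  | zero => simp [lsum, L.h_self]
  | succ m ih =>
    rw [List.ofFn_succ, List.ofFn_succ, Fin.sum_univ_succ]
    exact (L.h_add_add_le _ _ _ _).trans (add_le_add le_rfl (ih _ _))

end LSpace

open Set Function

section SetIntegral

variable {X T : Type*} [MeasurableSpace T]

structure IsSetIntegral (L : LSpace X) (P : X → X) (μ : Measure T)
    (intg : Set T → (T → X) → X) : Prop where
  h_le : ∀ (S : Set T) (f g : T → X), L.h (intg S f) (intg S g) ≤ ∫ s in S, L.h (f s) (g s) ∂μ
  const : ∀ (S : Set T) (y : X), intg S (fun _ => y) = L.smul (μ S).toReal (P y)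
  union : ∀ (S₁ S₂ : Set T) (f : T → X), Disjoint S₁ S₂ →
    intg (S₁ ∪ S₂) f = L.add (intg S₁ f) (intg S₂ f)

namespace IsSetIntegral

variable {L : LSpace X} {P : X → X} {μ : Measure T} {intg : Set T → (T → X) → X}

lemma h_le_setIntegral (hI : IsSetIntegral L P μ intg) {S : Set T} (hS : MeasurableSet S)
    {f g : T → X} {G : T → ℝ} (hG : IntegrableOn G S μ)
    (hfg : ∀ t ∈ S, L.h (f t) (g t) ≤ G t) :
    L.h (intg S f) (intg S g) ≤ ∫ t in S, G t ∂μ :=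
  (hI.h_le S f g).trans <| integral_mono_of_nonneg (ae_of_all _ fun _ => L.h_nonneg _ _) hG
    ((ae_restrict_iff' hS).mpr (ae_of_all _ hfg))

lemma intg_empty (hI : IsSetIntegral L P μ intg) (f : T → X) : intg ∅ f = L.theta := by
  have h := hI.h_le ∅ f fun _ => L.theta
  rw [Measure.restrict_empty, integral_zero_measure, hI.const, measure_empty,
    ENNReal.toReal_zero, L.zero_smul] at h
  exact L.eq_of_h_nonpos h

lemma intg_iUnion {m : ℕ} (hI : IsSetIntegral L P μ intg) {U : Fin m → Set T}
    (hU : Pairwise (Disjoint on U)) (f : T → X) :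
    intg (⋃ i, U i) f = L.lsum (List.ofFn fun i => intg (U i) f) := by
  induction m with
  | zero => rw [iUnion_of_empty, hI.intg_empty]; rfl
  | succ m ih =>
    have hdisj : Disjoint (U 0) (iUnion (U ∘ Fin.succ)) :=
      disjoint_iUnion_right.mpr fun i => hU (Fin.succ_ne_zero i).symm
    rw [iUnion_fin_add_one_eq_iUnion_succ, hI.union _ _ f hdisj, List.ofFn_succ]
    exact congrArg (L.add _) (ih (hU.comp_of_injective (Fin.succ_injective m)))

/-- Either some `t ↦ h (f t) (f s)` is not integrable, so its Bochner integral is the junk value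
`0`, or all are, and then on a set of infinite measure `f` must be constant. -/
lemma exists_setIntegral_h_eq_zero {S : Set T} (hS : μ S = ⊤) (f : T → X) :
    ∃ y, ∫ t in S, L.h (f t) y ∂μ = 0 := by
  by_cases hint : ∀ s, IntegrableOn (fun t => L.h (f t) (f s)) S μ
  · obtain ⟨s₀, -⟩ := nonempty_of_measure_ne_zero (hS.symm ▸ ENNReal.top_ne_zero)
    have hconst : ∀ s, L.h (f s) (f s₀) = 0 := by
      intro s
      have hint_const : IntegrableOn (fun _ => L.h (f s) (f s₀)) S μ :=
        ((hint s).add (hint s₀)).mono' aestronglyMeasurable_const <| ae_of_all _ fun t => by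
          rw [Real.norm_of_nonneg (L.h_nonneg _ _), Pi.add_apply, L.h_comm (f t) (f s)]
          exact L.h_triangle _ _ _
      simpa [hS] using hint_const
    exact ⟨f s₀, by simp [hconst]⟩
  · push Not at hint
    obtain ⟨s, hs⟩ := hint
    exact ⟨f s, integral_undef hs⟩

lemma intg_eq_theta_of_measure_eq_top (hI : IsSetIntegral L P μ intg) {S : Set T}
    (hS : μ S = ⊤) (f : T → X) : intg S f = L.theta := by
  obtain ⟨y, hy⟩ := exists_setIntegral_h_eq_zero hS f
  have h := hI.h_le S f fun _ => y
  rw [hI.const, hS, ENNReal.toReal_top, L.zero_smul, hy] at h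
  exact L.eq_of_h_nonpos h

lemma intg_eq_theta (hI : IsSetIntegral L P μ intg) {S : Set T} (hS : μ S = ⊤)
    (A : Set T) (f : T → X) : intg A f = L.theta := by
  by_cases hA : μ A = ⊤
  · exact hI.intg_eq_theta_of_measure_eq_top hA f
  have hSA : μ (S \ A) = ⊤ := top_le_iff.mp <| by
    simpa [hS, ENNReal.top_sub hA] using le_measure_sdiff (μ := μ) (s₁ := S) (s₂ := A)
  have h := hI.union (S \ A) A f disjoint_sdiff_left
  rw [hI.intg_eq_theta_of_measure_eq_top hSA, hI.intg_eq_theta_of_measure_eq_top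
    (measure_mono_top subset_union_left hSA), L.add_comm, L.add_theta] at h
  exact h.symm

end IsSetIntegral

end SetIntegral

section Voronoi

variable {T : Type*} [MetricSpace T] {n : ℕ} (x : Fin n → T)

lemma isClosed_Ttil (i : Fin n) : IsClosed (Ttil x i) := by
  simp only [Ttil, ofPred_forall]
  exact isClosed_iInter fun j => isClosed_iInter fun _ =>
    isClosed_le (continuous_id.dist continuous_const) (continuous_id.dist continuous_const)

lemma measurableSet_Tvor [MeasurableSpace T] [OpensMeasurableSpace T] (i : Fin n) :
    MeasurableSet (Tvor x i) :=
  (isClosed_Ttil x i).measurableSet.diff <|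
    .iUnion fun j => .iUnion fun _ => (isClosed_Ttil x j).measurableSet

lemma dist_le_of_mem_Tvor {i : Fin n} {t : T} (ht : t ∈ Tvor x i) (j : Fin n) :
    dist t (x i) ≤ dist t (x j) := by
  rcases eq_or_ne j i with rfl | hji
  · exact le_rfl
  · exact ht.1 j hji

lemma pairwise_disjoint_Tvor : Pairwise (Disjoint on Tvor x) := by
  have hlt : ∀ i j, i < j → Disjoint (Tvor x i) (Tvor x j) := fun i j hij =>
    disjoint_left.mpr fun _ hi hj => hj.2 (mem_biUnion hij hi.1)
  intro i j hij
  rcases hij.lt_or_gt with h | h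
  · exact hlt i j h
  · exact (hlt j i h).symm

lemma iUnion_Tvor [Nonempty (Fin n)] : ⋃ i, Tvor x i = univ := by
  refine eq_univ_of_forall fun t => ?_
  obtain ⟨i, -, hi⟩ := Finset.univ.exists_min_image (fun i => dist t (x i)) Finset.univ_nonempty
  have hti : t ∈ Ttil x i := fun j _ => hi j (Finset.mem_univ j)
  clear hi
  -- descend to the least index whose `Ttil` contains `t`
  induction i using WellFoundedLT.induction with
  | ind i ih =>
    by_cases hmin : t ∈ ⋃ (j : Fin n) (_ : j < i), Ttil x j
    · obtain ⟨j, hj, htj⟩ := mem_iUnion₂.mp hmin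
      exact ih j hj htj
    · exact mem_iUnion.mpr ⟨i, hti, hmin⟩

end Voronoi

namespace IsModulus

variable {ω : ℝ → ℝ}

lemma nonneg (hω : IsModulus ω) {a : ℝ} (ha : 0 ≤ a) : 0 ≤ ω a :=
  hω.1 ▸ hω.2.1 0 a le_rfl ha

lemma continuous_inf'_dist {ι T : Type*} [MetricSpace T] (hω : IsModulus ω) {s : Finset ι}
    (hs : s.Nonempty) (y : ι → T) : Continuous fun t => s.inf' hs fun i => ω (dist (y i) t) :=
  Continuous.finset_inf'_apply hs fun _ _ =>
    hω.2.2.1.comp_continuous (continuous_const.dist continuous_id) fun _ => dist_nonneg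

lemma le_inf'_of_mem_Tvor {T : Type*} [MetricSpace T] {n : ℕ} (hω : IsModulus ω)
    (hne : (Finset.univ : Finset (Fin n)).Nonempty) (x : Fin n → T) {i : Fin n} {t : T}
    (ht : t ∈ Tvor x i) : ω (dist t (x i)) ≤ Finset.univ.inf' hne fun j => ω (dist (x j) t) :=
  Finset.le_inf' _ _ fun j _ => by
    rw [dist_comm (x j)]
    exact hω.2.1 _ _ dist_nonneg (dist_le_of_mem_Tvor x ht j)

end IsModulus

lemma IsCompact.integrableOn_of_continuous {T : Type*} [TopologicalSpace T] [T2Space T]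
    [MeasurableSpace T] [OpensMeasurableSpace T] {μ : Measure T} {Q : Set T} (hQc : IsCompact Q) (hμQ : μ Q ≠ ⊤)
    {G : T → ℝ} (hG : Continuous G) : IntegrableOn G Q μ := by
  obtain ⟨C, hC⟩ := hQc.exists_bound_of_continuousOn hG.continuousOn
  exact Measure.integrableOn_of_bounded hμQ hG.aestronglyMeasurable
    ((ae_restrict_iff' hQc.measurableSet).mpr (ae_of_all _ hC))

theorem integral_recovery_method_error_general {X T : Type*}
    [MetricSpace T] [MeasurableSpace T] [BorelSpace T]
    (μ : Measure T)
    (L : LSpace X) (P : X → X)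
    (Q : Set T) (hQc : IsCompact Q)
    {n : ℕ} (hn : 0 < n) (x : Fin n → T)
    (intg : Set T → (T → X) → X)
    (hint_lip : ∀ (S : Set T) (f g : T → X),
      L.h (intg S f) (intg S g) ≤ ∫ s in S, L.h (f s) (g s) ∂μ)
    (hint_const : ∀ (S : Set T) (y : X), intg S (fun _ => y) = L.smul (μ S).toReal (P y))
    (hint_union : ∀ (S₁ S₂ : Set T) (f : T → X), Disjoint S₁ S₂ →
      intg (S₁ ∪ S₂) f = L.add (intg S₁ f) (intg S₂ f))
    (ω : ℝ → ℝ) (hω : IsModulus ω) :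
    ∀ f : T → X, (∀ s s' : T, L.h (f s) (f s') ≤ ω (dist s s')) →
      L.h (intg Q f)
          (L.lsum (List.ofFn fun i =>
            L.smul (μ (Tvor x i ∩ Q)).toReal (P (f (x i)))))
        ≤ ∫ t in Q,
            (Finset.univ.inf' (Finset.univ_nonempty_iff.mpr ⟨⟨0, hn⟩⟩)
              fun i => ω (dist (x i) t)) ∂μ := by
  intro f hf
  have hI : IsSetIntegral L P μ intg := ⟨hint_lip, hint_const, hint_union⟩
  have : Nonempty (Fin n) := ⟨⟨0, hn⟩⟩
  set G : T → ℝ := fun t => Finset.univ.inf' (Finset.univ_nonempty_iff.mpr ⟨⟨0, hn⟩⟩)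
    fun i => ω (dist (x i) t)
  set U : Fin n → Set T := fun i => Tvor x i ∩ Q
  have hQ : MeasurableSet Q := hQc.measurableSet
  have hU : ∀ i, MeasurableSet (U i) := fun i => (measurableSet_Tvor x i).inter hQ
  have hU_disj : Pairwise (Disjoint on U) := fun i j hij =>
    (pairwise_disjoint_Tvor x hij).mono inter_subset_left inter_subset_left
  have hU_Q : ⋃ i, U i = Q := by rw [← iUnion_inter, iUnion_Tvor, univ_inter]
  have hΦ : L.lsum (List.ofFn fun i => L.smul (μ (Tvor x i ∩ Q)).toReal (P (f (x i)))) =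
      L.lsum (List.ofFn fun i => intg (U i) fun _ => f (x i)) := by
    simp only [U, hI.const]
  rw [hΦ]
  rcases eq_or_ne (μ Q) ⊤ with hQ_top | hQ_fin
  · simp only [hI.intg_eq_theta hQ_top, L.lsum_ofFn_theta, L.h_self]
    exact setIntegral_nonneg hQ fun t _ => Finset.le_inf' _ _ fun i _ => hω.nonneg dist_nonneg
  have hG_int : IntegrableOn G Q μ :=
    hQc.integrableOn_of_continuous hQ_fin (hω.continuous_inf'_dist _ x)
  calc L.h (intg Q f) (L.lsum (List.ofFn fun i => intg (U i) fun _ => f (x i)))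
      ≤ ∑ i, L.h (intg (U i) f) (intg (U i) fun _ => f (x i)) := by
        rw [← hU_Q, hI.intg_iUnion hU_disj]
        exact L.h_lsum_ofFn_le _ _
    _ ≤ ∑ i, ∫ t in U i, G t ∂μ := Finset.sum_le_sum fun i _ =>
        hI.h_le_setIntegral (hU i) (hG_int.mono_set inter_subset_right) fun t ht =>
          (hf t (x i)).trans (hω.le_inf'_of_mem_Tvor _ x ht.1)
    _ = ∫ t in Q, G t ∂μ := by
        rw [← integral_iUnion_fintype hU hU_disj fun i => hG_int.mono_set inter_subset_right,
          hU_Q]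

/-- Error estimate for the recovery method
`Φ*(I(f)) = Σ_i P(f(x_i))·μ(T_i ∩ Q)` of the integral `∫_Q f dμ` on `H^ω(T,X)`
from the information `(P(f(x_1)),…,P(f(x_n)))`. -/
theorem integral_recovery_method_error {X T : Type*}
    [MetricSpace T] [CompactSpace T] [MeasurableSpace T] [BorelSpace T]
    (μ : Measure T)
    (L : LSpace X) (P : X → X) (hP : IsConvexifying L P)
    (Q : Set T) (hQc : IsCompact Q)
    {n : ℕ} (hn : 0 < n) (x : Fin n → T)
    (intg : Set T → (T → X) → X)
    (hint_lip : ∀ (S : Set T) (f g : T → X),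
      L.h (intg S f) (intg S g) ≤ ∫ s in S, L.h (f s) (g s) ∂μ)
    (hint_const : ∀ (S : Set T) (y : X), intg S (fun _ => y) = L.smul (μ S).toReal (P y))
    (hint_union : ∀ (S₁ S₂ : Set T) (f : T → X), Disjoint S₁ S₂ →
      intg (S₁ ∪ S₂) f = L.add (intg S₁ f) (intg S₂ f))
    (ω : ℝ → ℝ) (hω : IsModulus ω) :
    ∀ f : T → X, (∀ s s' : T, L.h (f s) (f s') ≤ ω (dist s s')) →
      L.h (intg Q f)
          (L.lsum (List.ofFn fun i =>
            L.smul (μ (Tvor x i ∩ Q)).toReal (P (f (x i)))))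
        ≤ ∫ t in Q,
            (Finset.univ.inf' (Finset.univ_nonempty_iff.mpr ⟨⟨0, hn⟩⟩)
              fun i => ω (dist (x i) t)) ∂μ :=
  integral_recovery_method_error_general μ L P Q hQc hn x intg hint_lip hint_const hint_union ω hω
end

section
/- Let ω be a modulus of continuity, R > 0, ε > 0. Define φ(t) = ω(R+ε) − ω(t) for 0 ≤ t ≤ R+ε, φ(t) = φ(2(R+ε) − t) for R+ε < t ≤ R+3ε, and φ(t) = φ(R−ε) for t > R+3ε. Then φ ∈ H^ω([0,∞),ℝ), i.e., |φ(t) − φ(s)| ≤ ω(|t−s|) for all t,s ≥ 0. -/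
/-!
Writing `g t = min t (max (2 (R + ε) - t) (R - ε))`, one has `φ = ω (R + ε) - ω ∘ g`, where `g`
is `1`-Lipschitz and maps `[0, ∞)` into itself. A monotone subadditive `ω` satisfies
`|ω a - ω b| ≤ ω |a - b|` on `[0, ∞)`, so `|φ t - φ s| ≤ ω |g t - g s| ≤ ω |t - s|`.
-/

/-- The auxiliary function `φ` built from a modulus of continuity `ω`:
`φ(t) = ω(R+ε) − ω(t)` for `0 ≤ t ≤ R+ε`, `φ(t) = φ(2(R+ε)−t)` for
`R+ε < t ≤ R+3ε`, and `φ(t) = φ(R−ε)` for `t > R+3ε`. -/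
noncomputable def phiAux (ω : ℝ → ℝ) (R ε t : ℝ) : ℝ :=
  if t ≤ R + ε then ω (R + ε) - ω t
  else if t ≤ R + 3 * ε then ω (R + ε) - ω (2 * (R + ε) - t)
  else ω (R + ε) - ω (R - ε)

lemma abs_sub_le_of_monotone_of_subadditive {ω : ℝ → ℝ}
    (hω_mono : ∀ a b : ℝ, 0 ≤ a → a ≤ b → ω a ≤ ω b)
    (hω_subadd : ∀ a b : ℝ, 0 ≤ a → 0 ≤ b → ω (a + b) ≤ ω a + ω b)
    {a b : ℝ} (ha : 0 ≤ a) (hb : 0 ≤ b) : |ω a - ω b| ≤ ω |a - b| := by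
  wlog hab : a ≤ b generalizing a b
  · rw [abs_sub_comm, abs_sub_comm a]
    exact this hb ha (le_of_not_ge hab)
  have h_add : ω b ≤ ω a + ω (b - a) := by
    simpa using hω_subadd a (b - a) ha (sub_nonneg.mpr hab)
  rw [abs_sub_comm, abs_of_nonneg (sub_nonneg.mpr (hω_mono a b ha hab)),
    abs_sub_comm, abs_of_nonneg (sub_nonneg.mpr hab)]
  linarith

noncomputable def phiAuxArg (R ε t : ℝ) : ℝ :=
  min t (max (2 * (R + ε) - t) (R - ε))

lemma phiAux_eq (ω : ℝ → ℝ) {R ε : ℝ} (hε : 0 ≤ ε) (t : ℝ) :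
    phiAux ω R ε t = ω (R + ε) - ω (phiAuxArg R ε t) := by
  unfold phiAux phiAuxArg
  split_ifs with h₁ h₂
  · rw [min_eq_left (le_max_of_le_left (by linarith))]
  · rw [max_eq_left (by linarith), min_eq_right (by linarith)]
  · rw [max_eq_right (by linarith), min_eq_right (by linarith)]

lemma phiAuxArg_nonneg {R ε t : ℝ} (hεR : ε ≤ R) (ht : 0 ≤ t) : 0 ≤ phiAuxArg R ε t :=
  le_min ht (le_max_of_le_right (sub_nonneg.mpr hεR))

lemma lipschitzWith_one_phiAuxArg (R ε : ℝ) : LipschitzWith 1 (phiAuxArg R ε) := by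
  have h_reflect : LipschitzWith 1 fun t : ℝ => 2 * (R + ε) - t :=
    LipschitzWith.of_dist_le_mul fun x y => by rw [dist_sub_left, NNReal.coe_one, one_mul]
  exact (LipschitzWith.id.min (h_reflect.max_const (R - ε))).weaken (max_self 1).le

theorem phiAux_mem_Homega_general (ω : ℝ → ℝ)
    (hω_mono : ∀ a b : ℝ, 0 ≤ a → a ≤ b → ω a ≤ ω b)
    (hω_subadd : ∀ a b : ℝ, 0 ≤ a → 0 ≤ b → ω (a + b) ≤ ω a + ω b)
    (R ε : ℝ) (hε : 0 < ε) (hεR : ε ≤ R) :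
    ∀ t s : ℝ, 0 ≤ t → 0 ≤ s →
      |phiAux ω R ε t - phiAux ω R ε s| ≤ ω |t - s| := by
  intro t s ht hs
  have hg_lip : |phiAuxArg R ε t - phiAuxArg R ε s| ≤ |t - s| := by
    simpa [Real.dist_eq] using (lipschitzWith_one_phiAuxArg R ε).dist_le_mul t s
  calc |phiAux ω R ε t - phiAux ω R ε s| = |ω (phiAuxArg R ε t) - ω (phiAuxArg R ε s)| := by
        rw [phiAux_eq ω hε.le, phiAux_eq ω hε.le, sub_sub_sub_cancel_left, abs_sub_comm]
    _ ≤ ω |phiAuxArg R ε t - phiAuxArg R ε s| :=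
        abs_sub_le_of_monotone_of_subadditive hω_mono hω_subadd
          (phiAuxArg_nonneg hεR ht) (phiAuxArg_nonneg hεR hs)
    _ ≤ ω |t - s| := hω_mono _ _ (abs_nonneg _) hg_lip

/-- The function `φ` belongs to `H^ω([0,∞),ℝ)`:
`|φ(t) − φ(s)| ≤ ω(|t−s|)` for all `t, s ≥ 0`. (The requirement `ε ≤ R` ensures
that `φ` only uses values of `ω` on its domain `[0,∞)`.) -/
theorem phiAux_mem_Homega (ω : ℝ → ℝ)
    (hω0 : ω 0 = 0)
    (hω_mono : ∀ a b : ℝ, 0 ≤ a → a ≤ b → ω a ≤ ω b)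
    (hω_cont : ContinuousOn ω (Set.Ici 0))
    (hω_subadd : ∀ a b : ℝ, 0 ≤ a → 0 ≤ b → ω (a + b) ≤ ω a + ω b)
    (R ε : ℝ) (hR : 0 < R) (hε : 0 < ε) (hεR : ε ≤ R) :
    ∀ t s : ℝ, 0 ≤ t → 0 ≤ s →
      |phiAux ω R ε t - phiAux ω R ε s| ≤ ω |t - s| :=
  phiAux_mem_Homega_general ω hω_mono hω_subadd R ε hε hεR
end
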